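/- Covariance matrix positivity/factorization: for τ > 0, λ > 0, let V₁ = (1/(2λ))(τ − sin(2τ√λ)/(2√λ)), V₂ = (1/2)(τ + sin(2τ√λ)/(2√λ)), and Cov = (1 − cos(2τ√λ))/(4λ) = sin²(τ√λ)/(2λ). Then V₁ > 0, and V₁V₂ − Cov² ≥ 0, so the symmetric matrix [[V₁, Cov],[Cov, V₂]] is positive semidefinite and admits a Cholesky-type factorization D Dᵀ with D = [[√V₁, 0],[Cov/√V₁, √((V₁V₂ − Cov²)/V₁)]]. -/

import Mathlib

/-! With `θ = τ√λ`, one has `V₁ = (2θ - sin 2θ) / (4λ√λ)`, which is positive since `sin x < x`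
for `x > 0`, and `V₁ V₂ - Cov² = (θ² - sin² θ) / (4λ²) ≥ 0` since `|sin θ| ≤ |θ|`.
The factorisation is then the Cholesky factorisation of a symmetric `2 × 2` matrix with positive
pivot and nonnegative determinant. -/

open Matrix

theorem Matrix.fin_two_symm_eq_cholesky_mul_transpose {a b c : ℝ} (ha : 0 < a)
    (hdet : 0 ≤ a * c - b ^ 2) :
    !![a, b; b, c] =
      !![√a, 0; b / √a, √((a * c - b ^ 2) / a)] *
      (!![√a, 0; b / √a, √((a * c - b ^ 2) / a)])ᵀ := by
  have hsa : √a * √a = a := Real.mul_self_sqrt ha.le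
  have hsa₀ : √a ≠ 0 := (Real.sqrt_pos.mpr ha).ne'
  have hsd : √((a * c - b ^ 2) / a) * √((a * c - b ^ 2) / a) = (a * c - b ^ 2) / a :=
    Real.mul_self_sqrt (div_nonneg hdet ha.le)
  ext i j
  fin_cases i <;> fin_cases j <;>
    simp only [Fin.zero_eta, Fin.mk_one, of_apply, cons_val', cons_val_zero, cons_val_one,
      cons_val_fin_one, mul_apply, transpose_apply, Fin.sum_univ_two, mul_zero, zero_mul, add_zero,
      hsa, hsd]
  · field_simp
  · field_simp
  · field_simp
    rw [Real.sq_sqrt ha.le]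
    ring

theorem Real.one_sub_cos_two_mul (x : ℝ) : 1 - Real.cos (2 * x) = 2 * Real.sin x ^ 2 := by
  rw [Real.sin_sq_eq_half_sub]
  ring

theorem Real.sq_sub_sin_sq_two_mul (x : ℝ) :
    (2 * x) ^ 2 - Real.sin (2 * x) ^ 2 - 4 * Real.sin x ^ 4 = 4 * (x ^ 2 - Real.sin x ^ 2) := by
  rw [Real.sin_two_mul]
  linear_combination (-4 * Real.sin x ^ 2) * Real.sin_sq_add_cos_sq x

theorem stmt_19 (τ lam : ℝ) (hτ : 0 < τ) (hlam : 0 < lam)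
    (V₁ V₂ Cov : ℝ)
    (hV₁ : V₁ = (1 / (2 * lam)) * (τ - Real.sin (2 * τ * Real.sqrt lam) / (2 * Real.sqrt lam)))
    (hV₂ : V₂ = (1 / 2) * (τ + Real.sin (2 * τ * Real.sqrt lam) / (2 * Real.sqrt lam)))
    (hCov : Cov = (1 - Real.cos (2 * τ * Real.sqrt lam)) / (4 * lam)) :
    Cov = Real.sin (τ * Real.sqrt lam) ^ 2 / (2 * lam) ∧
    0 < V₁ ∧
    0 ≤ V₁ * V₂ - Cov ^ 2 ∧
    (!![V₁, Cov; Cov, V₂] : Matrix (Fin 2) (Fin 2) ℝ) =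
      (!![Real.sqrt V₁, 0;
          Cov / Real.sqrt V₁, Real.sqrt ((V₁ * V₂ - Cov ^ 2) / V₁)]) *
      (!![Real.sqrt V₁, 0;
          Cov / Real.sqrt V₁, Real.sqrt ((V₁ * V₂ - Cov ^ 2) / V₁)])ᵀ := by
  obtain ⟨s, hs, rfl⟩ : ∃ s, 0 < s ∧ lam = s ^ 2 :=
    ⟨√lam, Real.sqrt_pos.mpr hlam, (Real.sq_sqrt hlam.le).symm⟩
  rw [Real.sqrt_sq hs.le] at hV₁ hV₂ hCov ⊢
  have h2θ : 2 * τ * s = 2 * (τ * s) := by ring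
  rw [h2θ] at hV₁ hV₂ hCov
  have hCov' : Cov = Real.sin (τ * s) ^ 2 / (2 * s ^ 2) := by
    rw [hCov, Real.one_sub_cos_two_mul]; field_simp; ring
  have hV₁pos : 0 < V₁ := by
    have hsin : Real.sin (2 * (τ * s)) / (2 * s) < τ := by
      rw [div_lt_iff₀ (by positivity)]
      linarith [Real.sin_lt (by positivity : 0 < 2 * (τ * s))]
    rw [hV₁]
    exact mul_pos (by positivity) (sub_pos.mpr hsin)
  have hdet : V₁ * V₂ - Cov ^ 2 = ((τ * s) ^ 2 - Real.sin (τ * s) ^ 2) / (4 * s ^ 4) := by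
    have hsin := Real.sq_sub_sin_sq_two_mul (τ * s)
    rw [hV₁, hV₂, hCov']
    -- opaque sines keep `field_simp` from reordering their arguments
    generalize Real.sin (2 * (τ * s)) = A at hsin ⊢
    generalize Real.sin (τ * s) = B at hsin ⊢
    field_simp
    linear_combination 4 * hsin
  have hdet_nonneg : 0 ≤ V₁ * V₂ - Cov ^ 2 := by
    rw [hdet]
    have := Real.sin_sq_le_sq (x := τ * s)
    exact div_nonneg (by linarith) (by positivity)
  exact ⟨hCov', hV₁pos, hdet_nonneg,
    Matrix.fin_two_symm_eq_cholesky_mul_transpose hV₁pos hdet_nonneg⟩
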